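/- Let w be a nonzero complex number, set U = w², and let κ, κ₂ be complex numbers. Define κ̂₁ = w·κ + κ₂/w and κ̂₂ = w·κ₂. Then |κ̂₁ − (2·Re(U)/|U|²)·κ̂₂|² ≥ |U|·|κ|² + |κ₂|²/|U| − 2·|κ₂|·|κ|. -/

import Mathlib

/-!
Since `2 Re U / |U|² = U⁻¹ + Ū⁻¹` and `U = w²`, the term `κ₂ / w` cancels against `κ₂ w / U` and
`κ̂₁ - (2 Re U / |U|²) κ̂₂ = w κ - w κ₂ / w̄²`. The reverse triangle inequality bounds its norm below by
`|w| |κ| - |κ₂| / |w|`, whose square is exactly the left-hand side.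
-/

open ComplexConjugate

namespace Complex

lemma ofReal_two_mul_re_div_norm_sq (z : ℂ) :
    ((2 * z.re / ‖z‖ ^ 2 : ℝ) : ℂ) = z⁻¹ + (conj z)⁻¹ := by
  simp only [inv_def, conj_conj, normSq_conj]
  rw [← add_mul, add_comm, add_conj, normSq_eq_norm_sq]
  push_cast
  ring

lemma mul_add_div_sub_inv_add_inv_conj_mul {w : ℂ} (hw : w ≠ 0) (κ κ₂ : ℂ) :
    w * κ + κ₂ / w - ((w ^ 2)⁻¹ + (conj (w ^ 2))⁻¹) * (w * κ₂) = w * κ - w * κ₂ / conj w ^ 2 := by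
  have hw' : conj w ≠ 0 := (map_ne_zero _).2 hw
  rw [map_pow]
  field_simp
  ring

lemma norm_mul_div_conj_sq {w : ℂ} (hw : w ≠ 0) (z : ℂ) : ‖w * z / conj w ^ 2‖ = ‖z‖ / ‖w‖ := by
  have hnw : ‖w‖ ≠ 0 := norm_ne_zero_iff.2 hw
  rw [norm_div, norm_mul, norm_pow, norm_conj]
  field_simp

end Complex

lemma sq_norm_sub_norm_le {E : Type*} [SeminormedAddCommGroup E] (a b : E) :
    (‖a‖ - ‖b‖) ^ 2 ≤ ‖a - b‖ ^ 2 :=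
  sq_le_sq.2 <| (abs_norm_sub_norm_le a b).trans_eq (abs_norm _).symm

lemma sq_mul_sub_div_eq {s : ℝ} (hs : s ≠ 0) (x y : ℝ) :
    (s * x - y / s) ^ 2 = s ^ 2 * x ^ 2 + y ^ 2 / s ^ 2 - 2 * y * x := by
  field_simp
  ring

theorem pointwise_estimate_E3
    (w U : ℂ) (hw : w ≠ 0) (hU : U = w ^ 2) (κ κ₂ : ℂ) :
    ‖U‖ * ‖κ‖ ^ 2
      + ‖κ₂‖ ^ 2 / ‖U‖
      - 2 * ‖κ₂‖ * ‖κ‖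
    ≤ ‖(w * κ + κ₂ / w)
        - ((2 * U.re / ‖U‖ ^ 2 : ℝ) : ℂ) * (w * κ₂)‖ ^ 2 := by
  subst hU
  have hnw : ‖w‖ ≠ 0 := norm_ne_zero_iff.2 hw
  calc ‖w ^ 2‖ * ‖κ‖ ^ 2 + ‖κ₂‖ ^ 2 / ‖w ^ 2‖ - 2 * ‖κ₂‖ * ‖κ‖
      = (‖w * κ‖ - ‖w * κ₂ / conj w ^ 2‖) ^ 2 := by
        rw [norm_mul, Complex.norm_mul_div_conj_sq hw, norm_pow, sq_mul_sub_div_eq hnw]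
    _ ≤ ‖w * κ - w * κ₂ / conj w ^ 2‖ ^ 2 := sq_norm_sub_norm_le _ _
    _ = _ := by
        rw [Complex.ofReal_two_mul_re_div_norm_sq, Complex.mul_add_div_sub_inv_add_inv_conj_mul hw]
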